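/- There exists a line in ℝ³ that intersects each of the four closed segments [V₂,V₃], [V₄,V₅], [V₈,V₉] and [V₁₀,V₁₁], where V₂=(0,0,−4), V₃=(8,−2,−4), V₄=(6,−3,−6), V₅=(0,0,−6), V₈=(10,−1,1), V₉=(6,1,0), V₁₀=(8,0,−1), V₁₁=(6,−1,0). (This is the quadrisecant L₄ of the primary knot K₀ intersecting the edges V₂V₃, V₄V₅, V₈V₉ and V₁₀V₁₁.) -/
import Mathlib


noncomputable section

/-- A line in ℝ³: a 1-dimensional affine subspace, in parametric form. -/
def IsLine (L : Set (Fin 3 → ℝ)) : Prop :=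
  ∃ p v : Fin 3 → ℝ, v ≠ 0 ∧ L = {x | ∃ t : ℝ, x = p + t • v}

def V₁ : Fin 3 → ℝ := ![0, 0, 0]
def V₂ : Fin 3 → ℝ := ![0, 0, -4]
def V₃ : Fin 3 → ℝ := ![8, -2, -4]
def V₄ : Fin 3 → ℝ := ![6, -3, -6]
def V₅ : Fin 3 → ℝ := ![0, 0, -6]
def V₆ : Fin 3 → ℝ := ![0, 0, -8]
def V₇ : Fin 3 → ℝ := ![10, -1, -8]
def V₈ : Fin 3 → ℝ := ![10, -1, 1]
def V₉ : Fin 3 → ℝ := ![6, 1, 0]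
def V₁₀ : Fin 3 → ℝ := ![8, 0, -1]
def V₁₁ : Fin 3 → ℝ := ![6, -1, 0]
def V₁₂ : Fin 3 → ℝ := ![12, -2, -3]
def V₁₃ : Fin 3 → ℝ := ![12, 0, 0]
def V₁₄ : Fin 3 → ℝ := ![6, 2, 0]

/-- The point V₁₅ = (10,−1,−2) on the edge V₇V₈. -/
def V₁₅ : Fin 3 → ℝ := ![10, -1, -2]

/-- The primary knot K₀: the closed polygon with successive vertices V₁,…,V₁₄. -/
def K₀ : Set (Fin 3 → ℝ) :=
  segment ℝ V₁ V₂ ∪ segment ℝ V₂ V₃ ∪ segment ℝ V₃ V₄ ∪ segment ℝ V₄ V₅ ∪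
  segment ℝ V₅ V₆ ∪ segment ℝ V₆ V₇ ∪ segment ℝ V₇ V₈ ∪ segment ℝ V₈ V₉ ∪
  segment ℝ V₉ V₁₀ ∪ segment ℝ V₁₀ V₁₁ ∪ segment ℝ V₁₁ V₁₂ ∪ segment ℝ V₁₂ V₁₃ ∪
  segment ℝ V₁₃ V₁₄ ∪ segment ℝ V₁₄ V₁

/-- There is a line in ℝ³ (the quadrisecant L₄ of K₀) intersecting each of the
closed segments [V₂,V₃], [V₄,V₅], [V₈,V₉] and [V₁₀,V₁₁]. -/
theorem quadrisecant_L₄_of_K₀ :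
    ∃ L : Set (Fin 3 → ℝ), IsLine L ∧
      (L ∩ segment ℝ V₂ V₃).Nonempty ∧
      (L ∩ segment ℝ V₄ V₅).Nonempty ∧
      (L ∩ segment ℝ V₈ V₉).Nonempty ∧
      (L ∩ segment ℝ V₁₀ V₁₁).Nonempty := by
  set r : ℝ := Real.sqrt 2857 with hrdef
  have hr : r ^ 2 = 2857 := Real.sq_sqrt (by norm_num)
  have hr0 : 0 ≤ r := Real.sqrt_nonneg _
  have h53 : 53 < r := by nlinarith
  have h54 : r < 54 := by nlinarith
  refine ⟨{x | ∃ t : ℝ, x = ![2*r-102, (51-r)/2, -4] + t • ![5*r-263, 55-r, 6]},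
    ⟨![2*r-102, (51-r)/2, -4], ![5*r-263, 55-r, 6], ?_, rfl⟩, ?_, ?_, ?_, ?_⟩
  · intro h
    have h2 := congrFun h 2
    simp at h2
  · -- segment [V₂, V₃], line parameter 0, segment parameter (r-51)/4
    refine ⟨![2*r-102, (51-r)/2, -4] + (0:ℝ) • ![5*r-263, 55-r, 6], ⟨0, rfl⟩,
      1-(r-51)/4, (r-51)/4, by nlinarith, by nlinarith, by ring, ?_⟩
    funext i
    fin_cases i <;>
      simp [V₂, V₃] <;> linear_combination (0:ℝ) * hr
  · -- segment [V₄, V₅], line parameter -1/3, segment parameter (61-r)/18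
    refine ⟨![2*r-102, (51-r)/2, -4] + (-1/3:ℝ) • ![5*r-263, 55-r, 6], ⟨-1/3, rfl⟩,
      1-(61-r)/18, (61-r)/18, by nlinarith, by nlinarith, by ring, ?_⟩
    funext i
    fin_cases i <;>
      simp [V₄, V₅] <;> linear_combination (0:ℝ) * hr
  · -- segment [V₈, V₉], line parameter (r+19)/96, segment parameter (61-r)/16
    refine ⟨![2*r-102, (51-r)/2, -4] + ((r+19)/96:ℝ) • ![5*r-263, 55-r, 6], ⟨(r+19)/96, rfl⟩,
      1-(61-r)/16, (61-r)/16, by nlinarith, by nlinarith, by ring, ?_⟩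
    funext i
    fin_cases i <;> simp [V₈, V₉]
    · linear_combination (-5/96 : ℝ) * hr
    · linear_combination (1/96 : ℝ) * hr
    · linear_combination (0:ℝ) * hr
  · -- segment [V₁₀, V₁₁], line parameter (r+7)/108, segment parameter (r-47)/18
    refine ⟨![2*r-102, (51-r)/2, -4] + ((r+7)/108:ℝ) • ![5*r-263, 55-r, 6], ⟨(r+7)/108, rfl⟩,
      1-(r-47)/18, (r-47)/18, by nlinarith, by nlinarith, by ring, ?_⟩
    funext i
    fin_cases i <;> simp [V₁₀, V₁₁]
    · linear_combination (-5/108 : ℝ) * hr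
    · linear_combination (1/108 : ℝ) * hr
    · linear_combination (0:ℝ) * hr
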